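/- (Uniform approximation of the hinge objective.) Let F_α(β,τ) = Σ_{i=1}^n w_i·L_α^{(i)}(β,τ) be the CSO objective and F_∞(β,τ) the corresponding hinge objective obtained by replacing φ_α with the hinge loss h(t) = max(t,0). Then for every (β,τ) ∈ ℝ^p × ℝ^{K−1}, 0 ≤ F_α(β,τ) − F_∞(β,τ) ≤ (log 2 / α)·Σ_{i=1}^n w_i·(Σ_{j=1}^{k_i−1} λ_j + Σ_{j=k_i}^{K−1} μ_j). -/

import Mathlib

open RealInnerProductSpace

/-- Softplus with temperature `α`. -/
noncomputable def softplus (α t : ℝ) : ℝ := (1 / α) * Real.log (1 + Real.exp (α * t))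

/-- Per-instance loss built from a generic penalty `φ` (softplus or hinge); threshold
index `j ∈ {1,…,K−1}` is represented by `j : Fin (K-1)` with value `(j : ℕ) + 1`. -/
noncomputable def instLoss {p K : ℕ} (φ : ℝ → ℝ) (x : EuclideanSpace ℝ (Fin p)) (k : ℕ)
    (lam mu : Fin (K - 1) → ℝ) (β : EuclideanSpace ℝ (Fin p)) (τ : Fin (K - 1) → ℝ) : ℝ :=
  ∑ j : Fin (K - 1),
    if (j : ℕ) + 1 < k then lam j * φ (τ j - ⟪β, x⟫)
    else mu j * φ (⟪β, x⟫ - τ j)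

open Finset

/-!
The hinge `max s 0` is the larger of the two exponents in `1 + exp s`, so
`exp (max s 0) ≤ 1 + exp s ≤ 2 exp (max s 0)`; taking logarithms and rescaling by `α` puts the
pointwise gap `softplus α t - max t 0` in `[0, log 2 / α]`. Both objectives are nonnegative
combinations of these penalties with the same coefficients, so the gap of the objectives lies
between `0` and `log 2 / α` times the sum of the coefficients.
-/

namespace Real

lemma max_le_log_one_add_exp (s : ℝ) : max s 0 ≤ log (1 + exp s) := by
  rw [← exp_le_exp, exp_log (by positivity)]
  rcases le_total s 0 with h | h
  · rw [max_eq_right h, exp_zero]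
    linarith [exp_pos s]
  · rw [max_eq_left h]
    linarith

lemma log_one_add_exp_le (s : ℝ) : log (1 + exp s) ≤ max s 0 + log 2 := by
  rw [← exp_le_exp, exp_log (by positivity), exp_add, exp_log two_pos]
  rcases le_total s 0 with h | h
  · rw [max_eq_right h, exp_zero]
    linarith [exp_le_one_iff.mpr h]
  · rw [max_eq_left h]
    linarith [one_le_exp h]

end Real

lemma softplus_sub_max_mem_Icc {α : ℝ} (hα : 0 < α) (t : ℝ) :
    softplus α t - max t 0 ∈ Set.Icc 0 (Real.log 2 / α) := by
  have hscale : max t 0 = max (α * t) 0 / α := by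
    rw [eq_div_iff hα.ne', mul_comm, mul_max_of_nonneg _ _ hα.le, mul_zero]
  have hgap : softplus α t - max t 0 = (Real.log (1 + Real.exp (α * t)) - max (α * t) 0) / α := by
    rw [softplus, hscale]
    ring
  rw [hgap]
  exact ⟨div_nonneg (sub_nonneg.mpr (Real.max_le_log_one_add_exp _)) hα.le,
    div_le_div_of_nonneg_right (by linarith [Real.log_one_add_exp_le (α * t)]) hα.le⟩

lemma Finset.sum_mul_sub_sum_mul_mem_Icc {ι : Type*} (s : Finset ι) {w f g b : ι → ℝ} {c : ℝ}
    (hw : ∀ i ∈ s, 0 ≤ w i) (hfg : ∀ i ∈ s, f i - g i ∈ Set.Icc 0 (c * b i)) :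
    ∑ i ∈ s, w i * f i - ∑ i ∈ s, w i * g i ∈ Set.Icc 0 (c * ∑ i ∈ s, w i * b i) := by
  rw [← sum_sub_distrib, mul_sum]
  simp_rw [← mul_sub]
  refine ⟨sum_nonneg fun i hi => mul_nonneg (hw i hi) (hfg i hi).1,
    sum_le_sum fun i hi => ?_⟩
  calc w i * (f i - g i) ≤ w i * (c * b i) := mul_le_mul_of_nonneg_left (hfg i hi).2 (hw i hi)
    _ = c * (w i * b i) := by ring

section instLoss

variable {p K : ℕ} (x : EuclideanSpace ℝ (Fin p)) (k : ℕ) (lam mu : Fin (K - 1) → ℝ)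
  (β : EuclideanSpace ℝ (Fin p)) (τ : Fin (K - 1) → ℝ)

lemma instLoss_eq_sum_mul (φ : ℝ → ℝ) :
    instLoss φ x k lam mu β τ = ∑ j : Fin (K - 1),
      (if (j : ℕ) + 1 < k then lam j else mu j) *
        φ (if (j : ℕ) + 1 < k then τ j - ⟪β, x⟫ else ⟪β, x⟫ - τ j) := by
  refine sum_congr rfl fun j _ => ?_
  split_ifs <;> rfl

lemma instLoss_sub_instLoss_mem_Icc {φ ψ : ℝ → ℝ} {c : ℝ} (hφψ : ∀ t, φ t - ψ t ∈ Set.Icc 0 c)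
    (hlam : ∀ j, 0 ≤ lam j) (hmu : ∀ j, 0 ≤ mu j) :
    instLoss φ x k lam mu β τ - instLoss ψ x k lam mu β τ ∈
      Set.Icc 0 (c * ((∑ j : Fin (K - 1), if (j : ℕ) + 1 < k then lam j else 0) +
        (∑ j : Fin (K - 1), if (j : ℕ) + 1 < k then 0 else mu j))) := by
  have hcoeff : ((∑ j : Fin (K - 1), if (j : ℕ) + 1 < k then lam j else 0) +
      (∑ j : Fin (K - 1), if (j : ℕ) + 1 < k then 0 else mu j)) =
      ∑ j : Fin (K - 1), (if (j : ℕ) + 1 < k then lam j else mu j) * 1 := by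
    rw [← sum_add_distrib]
    refine sum_congr rfl fun j _ => ?_
    split_ifs <;> simp
  rw [instLoss_eq_sum_mul, instLoss_eq_sum_mul, hcoeff]
  refine sum_mul_sub_sum_mul_mem_Icc _ (fun j _ => ?_) (fun _ _ => by rw [mul_one]; exact hφψ _)
  split_ifs
  exacts [hlam j, hmu j]

end instLoss

theorem cso_hinge_uniform_approx (p K n : ℕ)
    (x : Fin n → EuclideanSpace ℝ (Fin p)) (k : Fin n → ℕ)
    (w : Fin n → ℝ) (hw : ∀ i, 0 ≤ w i)
    (lam mu : Fin (K - 1) → ℝ) (hlam : ∀ j, 0 ≤ lam j) (hmu : ∀ j, 0 ≤ mu j)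
    (α : ℝ) (hα : 0 < α)
    (β : EuclideanSpace ℝ (Fin p)) (τ : Fin (K - 1) → ℝ) :
    0 ≤ (∑ i : Fin n, w i * instLoss (softplus α) (x i) (k i) lam mu β τ) -
        (∑ i : Fin n, w i * instLoss (fun t => max t 0) (x i) (k i) lam mu β τ) ∧
    (∑ i : Fin n, w i * instLoss (softplus α) (x i) (k i) lam mu β τ) -
        (∑ i : Fin n, w i * instLoss (fun t => max t 0) (x i) (k i) lam mu β τ) ≤
      (Real.log 2 / α) *
        ∑ i : Fin n, w i *
          ((∑ j : Fin (K - 1), if (j : ℕ) + 1 < k i then lam j else 0) +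
           (∑ j : Fin (K - 1), if (j : ℕ) + 1 < k i then 0 else mu j)) :=
  sum_mul_sub_sum_mul_mem_Icc _ (fun i _ => hw i) fun i _ =>
    instLoss_sub_instLoss_mem_Icc (x i) (k i) lam mu β τ (softplus_sub_max_mem_Icc hα) hlam hmu
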